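/- arXiv:2106.02933 — 2 statements merged into one kernel-verified Lean document; each statement's English description precedes it below -/
import Mathlib

section
/- Let p₁,…,p_m ∈ [0,1] sum to 1, and let (r₁,…,r_m) and (s₁,…,s_m) be two independent multinomial(k; p₁,…,p_m) random vectors. Then E[(1/(2k)) Σᵢ |rᵢ − sᵢ|] ≤ (Σᵢ √(pᵢ(1−pᵢ)))/√(2k). -/
open MeasureTheory ProbabilityTheory Finset

section Aux

lemma mult_downshift {m : ℕ} (i : Fin m) {v : Fin m → ℕ} (hv0 : v i ≠ 0) {n : ℕ}
    (hv : ∑ j, v j = n + 1) :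
    v i * Nat.multinomial univ v
      = (n + 1) * Nat.multinomial univ (Function.update v i (v i - 1)) := by
  classical
  obtain ⟨c, hc⟩ := Nat.exists_eq_succ_of_ne_zero hv0
  have hi : i ∉ univ.erase i := notMem_erase i univ
  have huniv : (univ : Finset (Fin m)) = insert i (univ.erase i) := by
    rw [insert_erase (mem_univ i)]
  set w := Function.update v i (v i - 1) with hw
  have hwe : Nat.multinomial (univ.erase i) w = Nat.multinomial (univ.erase i) v :=
    Nat.multinomial_congr fun a ha => Function.update_of_ne (mem_erase.1 ha).1 _ _
  have hsum_erase : v i + ∑ j ∈ univ.erase i, v j = n + 1 := by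
    rw [Finset.add_sum_erase _ _ (mem_univ i)]; exact hv
  have hvle : v i ≤ n + 1 := by omega
  have hse : ∑ j ∈ univ.erase i, v j = n + 1 - v i := by omega
  have hmv : Nat.multinomial univ v
      = (n + 1).choose (v i) * Nat.multinomial (univ.erase i) v := by
    conv_lhs => rw [huniv, Nat.multinomial_insert hi]
    rw [hse]
    congr 2
    omega
  have hmw : Nat.multinomial univ w
      = n.choose (v i - 1) * Nat.multinomial (univ.erase i) v := by
    conv_lhs => rw [huniv, Nat.multinomial_insert hi, hwe]
    have hsw : ∑ j ∈ univ.erase i, w j = n + 1 - v i := by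
      rw [← hse]
      exact Finset.sum_congr rfl fun a ha => Function.update_of_ne (mem_erase.1 ha).1 _ _
    rw [hsw, hw, Function.update_self]
    congr 2
    omega
  rw [hmv, hmw, hc]
  have key := Nat.add_one_mul_choose_eq n c
  have hcc : c + 1 - 1 = c := rfl
  rw [hcc, ← mul_assoc, ← mul_assoc]
  congr 1
  rw [mul_comm (c+1) _, key, mul_comm]

lemma step_sum {m : ℕ} (q : Fin m → ℝ) (i : Fin m) (n : ℕ) (g : ℕ → ℝ) :
    ∑ v ∈ piAntidiag (univ : Finset (Fin m)) (n+1),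
      ((Nat.multinomial univ v : ℝ) * ∏ j, q j ^ v j) * ((v i : ℝ) * g (v i - 1))
    = (n+1) * q i * ∑ w ∈ piAntidiag (univ : Finset (Fin m)) n,
      ((Nat.multinomial univ w : ℝ) * ∏ j, q j ^ w j) * g (w i) := by
  classical
  rw [Finset.mul_sum]
  rw [← Finset.sum_filter_of_ne (p := fun v => v i ≠ 0)
    (f := fun v => ((Nat.multinomial univ v : ℝ) * ∏ j, q j ^ v j) * ((v i : ℝ) * g (v i - 1)))
    (by intro v hv hne; intro h0; apply hne; simp [h0])]
  refine Finset.sum_nbij' (i := fun v => Function.update v i (v i - 1))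
    (j := fun w => Function.update w i (w i + 1)) ?_ ?_ ?_ ?_ ?_
  · intro v hv
    simp only [mem_filter, mem_piAntidiag] at hv ⊢
    obtain ⟨⟨hsum, -⟩, hne⟩ := hv
    refine ⟨?_, fun _ _ => mem_univ _⟩
    have h2 : v i + ∑ j ∈ univ.erase i, v j = n + 1 := by
      rw [Finset.add_sum_erase _ _ (mem_univ i)]; exact hsum
    have h3 : Function.update v i (v i - 1) i + ∑ j ∈ univ.erase i, Function.update v i (v i - 1) j
        = ∑ j, Function.update v i (v i - 1) j := Finset.add_sum_erase _ _ (mem_univ i)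
    have h4 : ∑ j ∈ univ.erase i, Function.update v i (v i - 1) j = ∑ j ∈ univ.erase i, v j :=
      Finset.sum_congr rfl fun a ha => Function.update_of_ne (mem_erase.1 ha).1 _ _
    have h5 : Function.update v i (v i - 1) i = v i - 1 := Function.update_self _ _ _
    have h6 : univ.sum (Function.update v i (v i - 1)) = ∑ j, Function.update v i (v i - 1) j := rfl
    rw [h6]
    omega
  · intro w hw
    simp only [mem_piAntidiag] at hw
    simp only [mem_filter, mem_piAntidiag]
    obtain ⟨hsum, -⟩ := hw
    refine ⟨⟨?_, fun _ _ => mem_univ _⟩, by simp⟩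
    have h2 : w i + ∑ j ∈ univ.erase i, w j = n := by
      rw [Finset.add_sum_erase _ _ (mem_univ i)]; exact hsum
    have h3 : Function.update w i (w i + 1) i + ∑ j ∈ univ.erase i, Function.update w i (w i + 1) j
        = ∑ j, Function.update w i (w i + 1) j := Finset.add_sum_erase _ _ (mem_univ i)
    have h4 : ∑ j ∈ univ.erase i, Function.update w i (w i + 1) j = ∑ j ∈ univ.erase i, w j :=
      Finset.sum_congr rfl fun a ha => Function.update_of_ne (mem_erase.1 ha).1 _ _
    have h5 : Function.update w i (w i + 1) i = w i + 1 := Function.update_self _ _ _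
    have h6 : univ.sum (Function.update w i (w i + 1)) = ∑ j, Function.update w i (w i + 1) j := rfl
    rw [h6]
    omega
  · intro v hv
    simp only [mem_filter] at hv
    funext j
    rcases eq_or_ne j i with rfl | hj
    · simp only [Function.update_self]
      omega
    · simp [Function.update_of_ne hj]
  · intro w hw
    funext j
    rcases eq_or_ne j i with rfl | hj
    · simp only [Function.update_self]
      omega
    · simp [Function.update_of_ne hj]
  · intro v hv
    simp only [mem_filter, mem_piAntidiag] at hv
    obtain ⟨⟨hsum, -⟩, hne⟩ := hv
    have hwi : Function.update v i (v i - 1) i = v i - 1 := Function.update_self _ _ _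
    have hmult : (v i : ℝ) * (Nat.multinomial univ v : ℝ)
        = (n+1 : ℝ) * (Nat.multinomial univ (Function.update v i (v i - 1)) : ℝ) := by
      exact_mod_cast congrArg (Nat.cast : ℕ → ℝ) (mult_downshift i hne hsum)
    have hprod : ∏ j, q j ^ v j = q i * ∏ j, q j ^ Function.update v i (v i - 1) j := by
      rw [← Finset.mul_prod_erase univ _ (mem_univ i),
        ← Finset.mul_prod_erase univ (fun j => q j ^ Function.update v i (v i - 1) j) (mem_univ i)]
      rw [hwi, ← mul_assoc]
      have h1 : q i ^ v i = q i * q i ^ (v i - 1) := by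
        conv_lhs => rw [show v i = (v i - 1) + 1 by omega]
        ring
      rw [h1]
      congr 1
      exact Finset.prod_congr rfl fun a ha => by
        rw [Function.update_of_ne (mem_erase.1 ha).1]
    show ((Nat.multinomial univ v : ℝ) * ∏ j, q j ^ v j) * ((v i : ℝ) * g (v i - 1))
      = (n+1 : ℝ) * q i * (((Nat.multinomial univ (Function.update v i (v i - 1)) : ℝ)
          * ∏ j, q j ^ Function.update v i (v i - 1) j) * g (Function.update v i (v i - 1) i))
    rw [hwi, hprod]
    linear_combination (g (v i - 1) * q i * (∏ j, q j ^ Function.update v i (v i - 1) j)) * hmult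

lemma M0 {m : ℕ} (q : Fin m → ℝ) (hq : ∑ i, q i = 1) (n : ℕ) :
    ∑ v ∈ piAntidiag (univ : Finset (Fin m)) n,
      ((Nat.multinomial univ v : ℝ) * ∏ j, q j ^ v j) = 1 := by
  have := Finset.sum_pow_eq_sum_piAntidiag (univ : Finset (Fin m)) q n
  rw [hq, one_pow] at this
  rw [← this]

lemma M1 {m : ℕ} (q : Fin m → ℝ) (hq : ∑ i, q i = 1) (i : Fin m) (n : ℕ) :
    ∑ v ∈ piAntidiag (univ : Finset (Fin m)) n,
      ((Nat.multinomial univ v : ℝ) * ∏ j, q j ^ v j) * (v i : ℝ) = n * q i := by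
  cases n with
  | zero => simp
  | succ n =>
    have h := step_sum q i n (fun _ => 1)
    simp only [mul_one] at h
    rw [h, M0 q hq n]
    push_cast
    ring

lemma M2 {m : ℕ} (q : Fin m → ℝ) (hq : ∑ i, q i = 1) (i : Fin m) (n : ℕ) :
    ∑ v ∈ piAntidiag (univ : Finset (Fin m)) n,
      ((Nat.multinomial univ v : ℝ) * ∏ j, q j ^ v j) * (v i : ℝ)^2
    = n * q i + (n : ℝ) * ((n - 1 : ℕ) : ℝ) * q i ^ 2 := by
  have hfac : ∑ v ∈ piAntidiag (univ : Finset (Fin m)) n,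
      ((Nat.multinomial univ v : ℝ) * ∏ j, q j ^ v j) * ((v i : ℝ) * ((v i - 1 : ℕ) : ℝ))
      = (n : ℝ) * ((n - 1 : ℕ) : ℝ) * q i ^ 2 := by
    cases n with
    | zero => simp
    | succ n =>
      rw [step_sum q i n (fun x => (x : ℝ)), M1 q hq i n]
      simp only [Nat.add_sub_cancel]
      push_cast
      ring
  have hpt : ∀ v : Fin m → ℕ, ∀ c : ℝ, c * (v i : ℝ)^2
      = c * ((v i : ℝ) * ((v i - 1 : ℕ) : ℝ)) + c * (v i : ℝ) := by
    intro v c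
    rcases Nat.eq_zero_or_pos (v i) with h | h
    · simp [h]
    · have : ((v i - 1 : ℕ) : ℝ) = (v i : ℝ) - 1 := by
        push_cast [Nat.cast_sub h]; ring
      rw [this]; ring
  calc ∑ v ∈ piAntidiag (univ : Finset (Fin m)) n,
        ((Nat.multinomial univ v : ℝ) * ∏ j, q j ^ v j) * (v i : ℝ)^2
      = ∑ v ∈ piAntidiag (univ : Finset (Fin m)) n,
        (((Nat.multinomial univ v : ℝ) * ∏ j, q j ^ v j) * ((v i : ℝ) * ((v i - 1 : ℕ) : ℝ))
          + ((Nat.multinomial univ v : ℝ) * ∏ j, q j ^ v j) * (v i : ℝ)) :=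
        Finset.sum_congr rfl fun v _ => hpt v _
    _ = (n : ℝ) * ((n - 1 : ℕ) : ℝ) * q i ^ 2 + n * q i := by
        rw [Finset.sum_add_distrib, hfac, M1 q hq i n]
    _ = _ := by ring

lemma integral_eq_sum_fiber {Ω : Type*} [MeasureSpace Ω] [IsProbabilityMeasure (ℙ : Measure Ω)]
    {α : Type*} [MeasurableSpace α] [MeasurableSingletonClass α]
    (T : Ω → α) (hT : Measurable T) (S : Finset α) (hTS : ∀ ω, T ω ∈ S) (g : α → ℝ) :
    ∫ ω, g (T ω) ∂(ℙ : Measure Ω) = ∑ q ∈ S, (ℙ (T ⁻¹' {q})).toReal * g q := by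
  have hrep : ∀ ω, g (T ω) = ∑ q ∈ S, Set.indicator (T ⁻¹' {q}) (fun _ => g q) ω := by
    intro ω
    rw [Finset.sum_eq_single_of_mem (T ω) (hTS ω)]
    · rw [Set.indicator_of_mem (by simp : ω ∈ T ⁻¹' {T ω})]
    · intro b _ hb
      rw [Set.indicator_of_notMem]
      simp [Ne.symm hb]
  simp_rw [hrep]
  rw [integral_finset_sum _ (fun q _ =>
    (integrable_const (g q)).indicator (hT (measurableSet_singleton q)))]
  refine Finset.sum_congr rfl fun q _ => ?_
  rw [integral_indicator_const _ (hT (measurableSet_singleton q)), smul_eq_mul, measureReal_def]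

end Aux

/-- For two independent `multinomial(k; p₁,…,p_m)` random vectors `r, s`,
`E[(1/(2k)) Σᵢ |rᵢ − sᵢ|] ≤ (Σᵢ √(pᵢ(1−pᵢ)))/√(2k)`. -/
theorem expected_cross_cluster_fraction_le
    {Ω : Type*} [MeasureSpace Ω] [IsProbabilityMeasure (ℙ : Measure Ω)]
    (m k : ℕ) (hk : 1 ≤ k) (p : Fin m → ℝ)
    (hp0 : ∀ i, 0 ≤ p i) (hp1 : ∑ i, p i = 1)
    (r s : Ω → Fin m → ℕ) (hmr : Measurable r) (hms : Measurable s)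
    (hindep : IndepFun r s ℙ)
    (hlawr : ∀ v : Fin m → ℕ, ∑ i, v i = k →
      ℙ {ω | r ω = v} = ENNReal.ofReal
        ((Nat.multinomial Finset.univ v : ℝ) * ∏ i, p i ^ v i))
    (hlaws : ∀ v : Fin m → ℕ, ∑ i, v i = k →
      ℙ {ω | s ω = v} = ENNReal.ofReal
        ((Nat.multinomial Finset.univ v : ℝ) * ∏ i, p i ^ v i))
    (hsumr : ∀ ω, ∑ i, r ω i = k) (hsums : ∀ ω, ∑ i, s ω i = k) :
    ∫ ω, (1 / (2 * (k : ℝ))) * ∑ i, |(r ω i : ℝ) - (s ω i : ℝ)| ∂ℙ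
      ≤ (∑ i, Real.sqrt (p i * (1 - p i))) / Real.sqrt (2 * k) := by
  classical
  set P : (Fin m → ℕ) → ℝ :=
    fun v => (Nat.multinomial Finset.univ v : ℝ) * ∏ i, p i ^ v i with hPdef
  set S : Finset (Fin m → ℕ) := piAntidiag (univ : Finset (Fin m)) k with hSdef
  have hPnn : ∀ v, 0 ≤ P v := fun v =>
    mul_nonneg (Nat.cast_nonneg _) (Finset.prod_nonneg fun j _ => pow_nonneg (hp0 j) _)
  have hT : Measurable (fun ω => (r ω, s ω)) := hmr.prodMk hms
  have hTS : ∀ ω, (r ω, s ω) ∈ S ×ˢ S := by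
    intro ω
    simp only [hSdef, mem_product, mem_piAntidiag]
    exact ⟨⟨hsumr ω, fun _ _ => mem_univ _⟩, ⟨hsums ω, fun _ _ => mem_univ _⟩⟩
  -- weights
  have hW : ∀ qq ∈ S ×ˢ S,
      (ℙ ((fun ω => (r ω, s ω)) ⁻¹' {qq})).toReal = P qq.1 * P qq.2 := by
    rintro ⟨v, u⟩ hq
    simp only [hSdef, mem_product, mem_piAntidiag] at hq
    have hpre : (fun ω => (r ω, s ω)) ⁻¹' {(v, u)} = r ⁻¹' {v} ∩ s ⁻¹' {u} := by
      ext ω; simp [Prod.ext_iff]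
    rw [hpre, hindep.measure_inter_preimage_eq_mul _ _
      (measurableSet_singleton v) (measurableSet_singleton u)]
    have h1 : r ⁻¹' {v} = {ω | r ω = v} := by ext ω; simp
    have h2 : s ⁻¹' {u} = {ω | s ω = u} := by ext ω; simp
    rw [h1, h2, hlawr v hq.1.1, hlaws u hq.2.1, ← ENNReal.ofReal_mul (hPnn v),
      ENNReal.toReal_ofReal (mul_nonneg (hPnn v) (hPnn u))]
  -- integral to sum
  have hint : ∫ ω, (1 / (2 * (k : ℝ))) * ∑ i, |(r ω i : ℝ) - (s ω i : ℝ)| ∂ℙ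
      = ∑ qq ∈ S ×ˢ S, (P qq.1 * P qq.2)
          * ((1 / (2 * (k : ℝ))) * ∑ i, |(qq.1 i : ℝ) - (qq.2 i : ℝ)|) := by
    have h := integral_eq_sum_fiber (fun ω => (r ω, s ω)) hT (S ×ˢ S) hTS
      (fun qq => (1 / (2 * (k : ℝ))) * ∑ i, |(qq.1 i : ℝ) - (qq.2 i : ℝ)|)
    rw [show (∫ ω, (1 / (2 * (k : ℝ))) * ∑ i, |(r ω i : ℝ) - (s ω i : ℝ)| ∂ℙ)
      = ∫ ω, (fun qq : (Fin m → ℕ) × (Fin m → ℕ) =>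
          (1 / (2 * (k : ℝ))) * ∑ i, |(qq.1 i : ℝ) - (qq.2 i : ℝ)|) ((r ω, s ω)) ∂ℙ from rfl, h]
    exact Finset.sum_congr rfl fun qq hq => by rw [hW qq hq]
  -- product of sums helper
  have hprodsum : ∀ f g : (Fin m → ℕ) → ℝ,
      ∑ qq ∈ S ×ˢ S, f qq.1 * g qq.2 = (∑ v ∈ S, f v) * (∑ u ∈ S, g u) := by
    intro f g
    rw [Finset.sum_product, Finset.sum_mul_sum]
  -- moments
  have hA0 : ∑ v ∈ S, P v = 1 := M0 p hp1 k
  have hkm1 : ((k - 1 : ℕ) : ℝ) = (k : ℝ) - 1 := by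
    rw [Nat.cast_sub hk, Nat.cast_one]
  have hA1 : ∀ i, ∑ v ∈ S, P v * (v i : ℝ) = k * p i := fun i => M1 p hp1 i k
  have hA2 : ∀ i, ∑ v ∈ S, P v * (v i : ℝ)^2
      = k * p i + (k : ℝ) * ((k : ℝ) - 1) * p i ^ 2 := by
    intro i
    rw [← hkm1]
    exact M2 p hp1 i k
  -- per-coordinate bound
  have key : ∀ i : Fin m, ∑ qq ∈ S ×ˢ S, (P qq.1 * P qq.2) * |(qq.1 i : ℝ) - (qq.2 i : ℝ)|
      ≤ Real.sqrt (2 * k * (p i * (1 - p i))) := by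
    intro i
    have hWnn : ∀ qq : (Fin m → ℕ) × (Fin m → ℕ), 0 ≤ P qq.1 * P qq.2 :=
      fun qq => mul_nonneg (hPnn _) (hPnn _)
    have hWsum : ∑ qq ∈ S ×ˢ S, P qq.1 * P qq.2 = 1 := by
      rw [hprodsum P P, hA0, one_mul]
    have hvar : ∑ qq ∈ S ×ˢ S, (P qq.1 * P qq.2) * ((qq.1 i : ℝ) - (qq.2 i : ℝ))^2
        = 2 * k * (p i * (1 - p i)) := by
      have hexp : ∀ qq : (Fin m → ℕ) × (Fin m → ℕ),
          (P qq.1 * P qq.2) * ((qq.1 i : ℝ) - (qq.2 i : ℝ))^2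
          = (P qq.1 * (qq.1 i : ℝ)^2) * P qq.2 + P qq.1 * (P qq.2 * (qq.2 i : ℝ)^2)
            - 2 * ((P qq.1 * (qq.1 i : ℝ)) * (P qq.2 * (qq.2 i : ℝ))) := fun qq => by ring
      rw [Finset.sum_congr rfl fun qq _ => hexp qq]
      rw [Finset.sum_sub_distrib, Finset.sum_add_distrib, ← Finset.mul_sum]
      rw [hprodsum (fun v => P v * (v i : ℝ)^2) P,
        hprodsum P (fun u => P u * (u i : ℝ)^2),
        hprodsum (fun v => P v * (v i : ℝ)) (fun u => P u * (u i : ℝ))]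
      rw [hA0, hA1 i, hA2 i]
      ring
    have hXnn : 0 ≤ ∑ qq ∈ S ×ˢ S, (P qq.1 * P qq.2) * |(qq.1 i : ℝ) - (qq.2 i : ℝ)| :=
      Finset.sum_nonneg fun qq _ => mul_nonneg (hWnn qq) (abs_nonneg _)
    have hcs := Finset.sum_mul_sq_le_sq_mul_sq (S ×ˢ S)
      (fun qq => Real.sqrt (P qq.1 * P qq.2))
      (fun qq => Real.sqrt (P qq.1 * P qq.2) * |(qq.1 i : ℝ) - (qq.2 i : ℝ)|)
    have hls : ∀ qq : (Fin m → ℕ) × (Fin m → ℕ),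
        Real.sqrt (P qq.1 * P qq.2) * (Real.sqrt (P qq.1 * P qq.2) * |(qq.1 i : ℝ) - (qq.2 i : ℝ)|)
        = (P qq.1 * P qq.2) * |(qq.1 i : ℝ) - (qq.2 i : ℝ)| := by
      intro qq
      rw [← mul_assoc, Real.mul_self_sqrt (hWnn qq)]
    have hf2 : ∀ qq : (Fin m → ℕ) × (Fin m → ℕ),
        Real.sqrt (P qq.1 * P qq.2) ^ 2 = P qq.1 * P qq.2 :=
      fun qq => Real.sq_sqrt (hWnn qq)
    have hg2 : ∀ qq : (Fin m → ℕ) × (Fin m → ℕ),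
        (Real.sqrt (P qq.1 * P qq.2) * |(qq.1 i : ℝ) - (qq.2 i : ℝ)|) ^ 2
        = (P qq.1 * P qq.2) * ((qq.1 i : ℝ) - (qq.2 i : ℝ))^2 := by
      intro qq
      rw [mul_pow, Real.sq_sqrt (hWnn qq), sq_abs]
    rw [Finset.sum_congr rfl fun qq _ => hls qq,
      Finset.sum_congr rfl fun qq _ => hf2 qq,
      Finset.sum_congr rfl fun qq _ => hg2 qq, hWsum, hvar, one_mul] at hcs
    calc ∑ qq ∈ S ×ˢ S, (P qq.1 * P qq.2) * |(qq.1 i : ℝ) - (qq.2 i : ℝ)|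
        = Real.sqrt ((∑ qq ∈ S ×ˢ S, (P qq.1 * P qq.2) * |(qq.1 i : ℝ) - (qq.2 i : ℝ)|)^2) :=
          (Real.sqrt_sq hXnn).symm
      _ ≤ Real.sqrt (2 * k * (p i * (1 - p i))) := Real.sqrt_le_sqrt hcs
  -- assemble
  rw [hint]
  have hswap : ∑ qq ∈ S ×ˢ S, (P qq.1 * P qq.2)
        * ((1 / (2 * (k : ℝ))) * ∑ i, |(qq.1 i : ℝ) - (qq.2 i : ℝ)|)
      = (1 / (2 * (k : ℝ))) * ∑ i, ∑ qq ∈ S ×ˢ S,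
          (P qq.1 * P qq.2) * |(qq.1 i : ℝ) - (qq.2 i : ℝ)| := by
    calc ∑ qq ∈ S ×ˢ S, (P qq.1 * P qq.2)
          * ((1 / (2 * (k : ℝ))) * ∑ i, |(qq.1 i : ℝ) - (qq.2 i : ℝ)|)
        = ∑ qq ∈ S ×ˢ S, ∑ i, (1 / (2 * (k : ℝ)))
            * ((P qq.1 * P qq.2) * |(qq.1 i : ℝ) - (qq.2 i : ℝ)|) := by
          refine Finset.sum_congr rfl fun qq _ => ?_
          rw [Finset.mul_sum, Finset.mul_sum]
          exact Finset.sum_congr rfl fun i _ => by ring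
      _ = ∑ i, ∑ qq ∈ S ×ˢ S, (1 / (2 * (k : ℝ)))
            * ((P qq.1 * P qq.2) * |(qq.1 i : ℝ) - (qq.2 i : ℝ)|) := Finset.sum_comm
      _ = (1 / (2 * (k : ℝ))) * ∑ i, ∑ qq ∈ S ×ˢ S,
            (P qq.1 * P qq.2) * |(qq.1 i : ℝ) - (qq.2 i : ℝ)| := by
          rw [Finset.mul_sum]
          exact Finset.sum_congr rfl fun i _ => (Finset.mul_sum _ _ _).symm
  rw [hswap]
  have hkR : (1 : ℝ) ≤ (k : ℝ) := by exact_mod_cast hk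
  have h2kpos : (0 : ℝ) < 2 * k := by nlinarith
  have hsqpos : 0 < Real.sqrt (2 * k) := Real.sqrt_pos.mpr h2kpos
  have hstep : (1 / (2 * (k : ℝ))) * ∑ i, ∑ qq ∈ S ×ˢ S,
        (P qq.1 * P qq.2) * |(qq.1 i : ℝ) - (qq.2 i : ℝ)|
      ≤ (1 / (2 * (k : ℝ))) * ∑ i, Real.sqrt (2 * k * (p i * (1 - p i))) := by
    refine mul_le_mul_of_nonneg_left (Finset.sum_le_sum fun i _ => key i) (by positivity)
  refine hstep.trans (le_of_eq ?_)
  have hsplit : ∀ i : Fin m, Real.sqrt (2 * k * (p i * (1 - p i)))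
      = Real.sqrt (2 * k) * Real.sqrt (p i * (1 - p i)) :=
    fun i => Real.sqrt_mul (le_of_lt h2kpos) _
  rw [Finset.sum_congr rfl fun i _ => hsplit i, ← Finset.mul_sum]
  rw [eq_div_iff (ne_of_gt hsqpos)]
  have hss := Real.mul_self_sqrt (le_of_lt h2kpos)
  have hre : (1 / (2 * (k : ℝ))) * (Real.sqrt (2 * (k:ℝ)) * ∑ i, Real.sqrt (p i * (1 - p i)))
        * Real.sqrt (2 * (k:ℝ))
      = (Real.sqrt (2 * (k:ℝ)) * Real.sqrt (2 * (k:ℝ)))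
        * (∑ i, Real.sqrt (p i * (1 - p i))) / (2 * (k:ℝ)) := by ring
  rw [hre, hss]
  exact mul_div_cancel_left₀ _ (ne_of_gt h2kpos)
end

section
/- Suppose in a perfect matching between two N-point batches partitioned into m clusters, the number of cross-cluster edges strictly exceeds (1/2)Σᵢ|rᵢ − sᵢ|, where rᵢ, sᵢ are the cluster-i counts in each batch. Then there exist two cross-cluster edges (p, q) and (p', q') with p, p' in the same cluster of batch 1 or q, q' in the same cluster of batch 2, arranged so that rerouting them to two intra-or-fewer-cross edges strictly reduces the number of cross edges; in particular, for m = 2 there exist two cross edges (p,q), (p',q') with p, p' in cluster 1 and q, q' in cluster 2 of opposite orientation. -/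
open Finset

lemma abs_nat_sub_of_disj (x y : ℕ) (h : x = 0 ∨ y = 0) : |(x:ℤ) - y| = x + y := by
  rcases h with rfl | rfl
  · rw [Nat.cast_zero, zero_sub, abs_neg, abs_of_nonneg (by positivity), zero_add]
  · rw [Nat.cast_zero, sub_zero, abs_of_nonneg (by positivity), add_zero]

/-- Pigeonhole: if a perfect matching `σ` between two `N`-point batches with cluster
labels `c₁, c₂ : Fin N → Fin m` has strictly more than `(1/2)Σᵢ|rᵢ − sᵢ|` cross-cluster
edges, then there are two distinct cross-cluster edges sharing a cluster (the batch-1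
cluster of one equals the batch-2 cluster of the other), so that rerouting them strictly
reduces the number of cross edges. -/
theorem excess_cross_edges_reroutable
    (N m : ℕ) (c₁ c₂ : Fin N → Fin m) (σ : Equiv.Perm (Fin N))
    (hexcess : (∑ i : Fin m,
        |((Finset.univ.filter fun a => c₁ a = i).card : ℤ)
          - ((Finset.univ.filter fun b => c₂ b = i).card : ℤ)|)
      < 2 * ((Finset.univ.filter fun a => c₁ a ≠ c₂ (σ a)).card : ℤ)) :
    ∃ a b : Fin N, a ≠ b ∧ c₁ a ≠ c₂ (σ a) ∧ c₁ b ≠ c₂ (σ b) ∧ c₁ a = c₂ (σ b) := by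
  by_contra hcon
  push_neg at hcon
  set S : Finset (Fin N) := univ.filter fun a => c₁ a ≠ c₂ (σ a) with hS
  have key : ∀ a ∈ S, ∀ b ∈ S, c₁ a ≠ c₂ (σ b) := by
    intro a ha b hb
    simp only [hS, Finset.mem_filter, Finset.mem_univ, true_and] at ha hb
    rcases eq_or_ne a b with rfl | h
    · exact ha
    · exact hcon a b h ha hb
  -- reindex s_i via σ
  have hs : ∀ i : Fin m, (univ.filter fun b => c₂ b = i).card
      = (univ.filter fun a => c₂ (σ a) = i).card := by
    intro i
    apply Finset.card_bij' (fun b _ => σ.symm b) (fun a _ => σ a) <;> simp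
  -- split counts by crossness
  have hA : ∀ i : Fin m, ((univ.filter fun a => c₁ a = i).card : ℤ)
      = (S.filter fun a => c₁ a = i).card
        + ((univ.filter fun a => c₁ a = c₂ (σ a) ∧ c₁ a = i)).card := by
    intro i
    have key2 := Finset.card_filter_add_card_filter_not
      (s := univ.filter fun a : Fin N => c₁ a = i)
      (p := fun a => c₁ a = c₂ (σ a))
    have h1 : (S.filter fun a => c₁ a = i)
        = (univ.filter fun a : Fin N => c₁ a = i).filter
            (fun a => ¬ c₁ a = c₂ (σ a)) := by
      rw [hS]; ext x; simp only [Finset.mem_filter, Finset.mem_univ, true_and]; tauto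
    have h2 : (univ.filter fun a => c₁ a = c₂ (σ a) ∧ c₁ a = i)
        = (univ.filter fun a : Fin N => c₁ a = i).filter
            (fun a => c₁ a = c₂ (σ a)) := by
      ext x; simp only [Finset.mem_filter, Finset.mem_univ, true_and]; tauto
    rw [h1, h2]
    omega
  have hB : ∀ i : Fin m, ((univ.filter fun a => c₂ (σ a) = i).card : ℤ)
      = (S.filter fun a => c₂ (σ a) = i).card
        + ((univ.filter fun a => c₁ a = c₂ (σ a) ∧ c₁ a = i)).card := by
    intro i
    have key2 := Finset.card_filter_add_card_filter_not
      (s := univ.filter fun a : Fin N => c₂ (σ a) = i)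
      (p := fun a => c₁ a = c₂ (σ a))
    have h1 : (S.filter fun a => c₂ (σ a) = i)
        = (univ.filter fun a : Fin N => c₂ (σ a) = i).filter
            (fun a => ¬ c₁ a = c₂ (σ a)) := by
      rw [hS]; ext x; simp only [Finset.mem_filter, Finset.mem_univ, true_and]; tauto
    have h2 : (univ.filter fun a => c₁ a = c₂ (σ a) ∧ c₁ a = i)
        = (univ.filter fun a : Fin N => c₂ (σ a) = i).filter
            (fun a => c₁ a = c₂ (σ a)) := by
      ext x; simp only [Finset.mem_filter, Finset.mem_univ, true_and]
      constructor
      · rintro ⟨h, rfl⟩; exact ⟨h.symm, h⟩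
      · rintro ⟨h, h'⟩; exact ⟨h', h'.trans h⟩
    rw [h1, h2]
    omega
  -- per-cluster: one of the two cross counts is zero
  have hmin : ∀ i : Fin m, (S.filter fun a => c₁ a = i).card = 0
      ∨ (S.filter fun a => c₂ (σ a) = i).card = 0 := by
    intro i
    by_contra h
    push_neg at h
    obtain ⟨h1, h2⟩ := h
    obtain ⟨a, ha⟩ := Finset.card_pos.mp (Nat.pos_of_ne_zero h1)
    obtain ⟨b, hb⟩ := Finset.card_pos.mp (Nat.pos_of_ne_zero h2)
    rw [Finset.mem_filter] at ha hb
    exact key a ha.1 b hb.1 (ha.2.trans hb.2.symm)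
  -- per-cluster abs value
  have habs : ∀ i : Fin m,
      |((univ.filter fun a => c₁ a = i).card : ℤ)
        - ((univ.filter fun b => c₂ b = i).card : ℤ)|
      = (S.filter fun a => c₁ a = i).card + (S.filter fun a => c₂ (σ a) = i).card := by
    intro i
    rw [hs i, hA i, hB i, add_sub_add_right_eq_sub]
    exact abs_nat_sub_of_disj _ _ (hmin i)
  -- sums of fibers
  have hsumA : ∑ i : Fin m, (S.filter fun a => c₁ a = i).card = S.card :=
    (Finset.card_eq_sum_card_fiberwise (f := c₁) (t := univ)
      (fun x _ => Finset.mem_univ _)).symm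
  have hsumB : ∑ i : Fin m, (S.filter fun a => c₂ (σ a) = i).card = S.card :=
    (Finset.card_eq_sum_card_fiberwise (f := fun a => c₂ (σ a)) (t := univ)
      (fun x _ => Finset.mem_univ _)).symm
  have : (∑ i : Fin m,
      |((univ.filter fun a => c₁ a = i).card : ℤ)
        - ((univ.filter fun b => c₂ b = i).card : ℤ)|) = 2 * (S.card : ℤ) := by
    rw [Finset.sum_congr rfl fun i _ => habs i, Finset.sum_add_distrib]
    have e1 := congrArg (Nat.cast : ℕ → ℤ) hsumA
    have e2 := congrArg (Nat.cast : ℕ → ℤ) hsumB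
    push_cast at e1 e2
    rw [e1, e2]
    ring
  rw [this] at hexcess
  exact lt_irrefl _ hexcess
end
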